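/- Let x̂ be the reg-mod-BPDN solution under the hypotheses of Theorem 1 applied to a subset Δ̃ ⊆ Δ (Q_{T,λ}(Δ̃) invertible, ERC_{T,λ}(Δ̃) > 0, γ = γ*_{T,λ}(Δ̃)). Then the numerator of γ* can be bounded as ‖A_{(T∪Δ̃)^c}'(y − Ac(Δ̃))‖_∞ ≤ maxcor(Δ̃)·(λf₂(Δ̃)‖x_T − μ̂_T‖₂ + f₃(Δ̃)‖w‖₂ + f₄(Δ̃)‖x_{Δ∖Δ̃}‖₂) + ‖A_{(T∪Δ̃)^c}'w‖_∞, where maxcor(Δ̃) = max_{i∉T∪Δ̃}‖A_i'A_{T∪Δ}‖₂. -/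

import Mathlib

open Matrix BigOperators Finset

noncomputable section

abbrev Idx {m : ℕ} (T : Finset (Fin m)) := {j : Fin m // j ∈ T}

/-- Submatrix of `A` consisting of the columns indexed by `T`. -/
def colsub {n m : ℕ} (A : Matrix (Fin n) (Fin m) ℝ) (T : Finset (Fin m)) :
    Matrix (Fin n) (Idx T) ℝ := Matrix.of fun i j => A i j.1

/-- Euclidean (ℓ2) norm of a finitely indexed vector. -/
def l2 {α : Type*} [Fintype α] (v : α → ℝ) : ℝ := Real.sqrt (∑ i, v i ^ 2)

/-- ℓ1 norm. -/
def l1 {α : Type*} [Fintype α] (v : α → ℝ) : ℝ := ∑ i, |v i|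

/-- ℓ∞ (sup) norm. -/
def linf {α : Type*} [Fintype α] (v : α → ℝ) : ℝ := ⨆ i, |v i|

/-- Spectral (ℓ2 operator) norm of a matrix. -/
def spec {α β : Type*} [Fintype α] [Fintype β] [DecidableEq β] (M : Matrix α β ℝ) : ℝ :=
  ‖LinearMap.toContinuousLinearMap (Matrix.toEuclideanLin M)‖

/-- `Q_{T,λ}(S) = A_{T∪S}' A_{T∪S} + λ·diag(I_T, 0_S)`. -/
def Qmat {n m : ℕ} (A : Matrix (Fin n) (Fin m) ℝ) (T S : Finset (Fin m)) (lam : ℝ) :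
    Matrix (Idx (T ∪ S)) (Idx (T ∪ S)) ℝ :=
  (colsub A (T ∪ S))ᵀ * colsub A (T ∪ S) +
    lam • (Matrix.of (fun i j => if i = j ∧ (i : Fin m) ∈ T then (1 : ℝ) else 0) :
      Matrix (Idx (T ∪ S)) (Idx (T ∪ S)) ℝ)

/-- `M_{T,λ} = I − A_T (A_T'A_T + λ I_T)⁻¹ A_T'`. -/
def Mmat {n m : ℕ} (A : Matrix (Fin n) (Fin m) ℝ) (T : Finset (Fin m)) (lam : ℝ) :
    Matrix (Fin n) (Fin n) ℝ :=
  1 - colsub A T * ((colsub A T)ᵀ * colsub A T + lam • 1)⁻¹ * (colsub A T)ᵀ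

/-- `P_{T,λ}(Δ) = (A_Δ' M A_Δ)⁻¹`. -/
def Pmat {n m : ℕ} (A : Matrix (Fin n) (Fin m) ℝ) (T Δ : Finset (Fin m)) (lam : ℝ) :
    Matrix (Idx Δ) (Idx Δ) ℝ :=
  ((colsub A Δ)ᵀ * Mmat A T lam * colsub A Δ)⁻¹

/-- The regularized least-squares estimate supported on `T ∪ S`:
`c_{T∪S} = Q⁻¹ (A_{T∪S}' y + [λμ̂_T ; 0_S])`, zero outside `T ∪ S`. -/
def cvec {n m : ℕ} (A : Matrix (Fin n) (Fin m) ℝ) (T S : Finset (Fin m)) (lam : ℝ)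
    (y : Fin n → ℝ) (μ : Fin m → ℝ) : Fin m → ℝ :=
  fun i => if h : i ∈ T ∪ S then
    (Qmat A T S lam)⁻¹.mulVec
      (fun j => (∑ k, A k j.1 * y k) + (if (j : Fin m) ∈ T then lam * μ j.1 else 0)) ⟨i, h⟩
  else 0

/-- The reg-mod-BPDN objective
`L(b) = γ‖b_{T^c}‖₁ + (1/2)‖y − Ab‖₂² + (λ/2)‖b_T − μ̂_T‖₂²`. -/
def Lobj {n m : ℕ} (A : Matrix (Fin n) (Fin m) ℝ) (T : Finset (Fin m)) (γ lam : ℝ)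
    (y : Fin n → ℝ) (μ : Fin m → ℝ) (b : Fin m → ℝ) : ℝ :=
  γ * (∑ i ∈ Tᶜ, |b i|) + (1/2) * (∑ i, (y i - A.mulVec b i) ^ 2) +
    (lam/2) * (∑ i ∈ T, (b i - μ i) ^ 2)

/-- The quadratic part `L₁(b) = (1/2)‖y − Ab‖₂² + (λ/2)‖b_T − μ̂_T‖₂²`. -/
def L1obj {n m : ℕ} (A : Matrix (Fin n) (Fin m) ℝ) (T : Finset (Fin m)) (lam : ℝ)
    (y : Fin n → ℝ) (μ : Fin m → ℝ) (b : Fin m → ℝ) : ℝ :=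
  (1/2) * (∑ i, (y i - A.mulVec b i) ^ 2) + (lam/2) * (∑ i ∈ T, (b i - μ i) ^ 2)

/-- `ERC_{T,λ}(Δ) = 1 − max_{ω∉T∪Δ} ‖P(Δ) A_Δ' M A_ω‖₁`. -/
def ERC {n m : ℕ} (A : Matrix (Fin n) (Fin m) ℝ) (T Δ : Finset (Fin m)) (lam : ℝ) : ℝ :=
  1 - ⨆ ω : Idx ((T ∪ Δ)ᶜ),
    l1 ((Pmat A T Δ lam * (colsub A Δ)ᵀ * Mmat A T lam).mulVec (fun i => A i ω.1))

/-- `f₁(Δ)`. -/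
def f1 {n m : ℕ} (A : Matrix (Fin n) (Fin m) ℝ) (T Δ : Finset (Fin m)) (lam : ℝ) : ℝ :=
  Real.sqrt
    (spec (((colsub A T)ᵀ * colsub A T + lam • 1)⁻¹ * (colsub A T)ᵀ * colsub A Δ *
        Pmat A T Δ lam) ^ 2 + spec (Pmat A T Δ lam) ^ 2)

/-- `f₂(Δ) = ‖Q⁻¹‖₂`. -/
def f2 {n m : ℕ} (A : Matrix (Fin n) (Fin m) ℝ) (T Δ : Finset (Fin m)) (lam : ℝ) : ℝ :=
  spec ((Qmat A T Δ lam)⁻¹)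

/-- `f₃(Δ) = ‖Q⁻¹ A_{T∪Δ}'‖₂`. -/
def f3 {n m : ℕ} (A : Matrix (Fin n) (Fin m) ℝ) (T Δ : Finset (Fin m)) (lam : ℝ) : ℝ :=
  spec ((Qmat A T Δ lam)⁻¹ * (colsub A (T ∪ Δ))ᵀ)

/-- `f₄(Δ̃) = sqrt(‖Q(Δ̃)⁻¹ A_{T∪Δ̃}' A_{Δ∖Δ̃}‖₂² + 1)`. -/
def f4 {n m : ℕ} (A : Matrix (Fin n) (Fin m) ℝ) (T Δ Δt : Finset (Fin m)) (lam : ℝ) : ℝ :=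
  Real.sqrt
    (spec ((Qmat A T Δt lam)⁻¹ * (colsub A (T ∪ Δt))ᵀ * colsub A (Δ \ Δt)) ^ 2 + 1)

/-- Numerator of `γ*`: `‖A_{(T∪Δ)^c}'(y − A c(Δ))‖_∞`. -/
def gammaNum {n m : ℕ} (A : Matrix (Fin n) (Fin m) ℝ) (T Δ : Finset (Fin m)) (lam : ℝ)
    (y : Fin n → ℝ) (μ : Fin m → ℝ) : ℝ :=
  linf (fun j : Idx ((T ∪ Δ)ᶜ) =>
    ∑ i, A i j.1 * (y i - A.mulVec (cvec A T Δ lam y μ) i))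

/-- `γ*_{T,λ}(Δ)`. -/
def gammaStar {n m : ℕ} (A : Matrix (Fin n) (Fin m) ℝ) (T Δ : Finset (Fin m)) (lam : ℝ)
    (y : Fin n → ℝ) (μ : Fin m → ℝ) : ℝ :=
  gammaNum A T Δ lam y μ / ERC A T Δ lam

/-! On `S = T ∪ Δ̃` the estimate `c = c(Δ̃)` solves `Q c_S = A_S' y + λ μ̂_T`, while
`Q x_S = A_S' A_S x_S + λ x_T`. Since `x` is supported on `S ∪ (Δ ∖ Δ̃)`, we have
`y = A_S x_S + A_{Δ∖Δ̃} x_{Δ∖Δ̃} + w`, hence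
`x_S − c_S = Q⁻¹ (λ (x − μ̂)_T − A_S' w − A_S' A_{Δ∖Δ̃} x_{Δ∖Δ̃})`
and `‖(x − c)_S‖₂ ≤ t + s r` with `t = λ f₂ ‖x_T − μ̂_T‖₂ + f₃ ‖w‖₂`,
`s = ‖Q⁻¹ A_S' A_{Δ∖Δ̃}‖₂` and `r = ‖x_{Δ∖Δ̃}‖₂`. On `Δ ∖ Δ̃` the error `x − c` is just `x`, so
`‖(x − c)_{T∪Δ}‖₂ ≤ √((t + s r)² + r²) ≤ t + f₄ r`. Finally, for `j ∉ S`,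
`A_j'(y − A c) = A_j' A_{T∪Δ} (x − c)_{T∪Δ} + A_j' w`, and Cauchy–Schwarz bounds the first term
by `‖A_j' A_{T∪Δ}‖₂ ‖(x − c)_{T∪Δ}‖₂`.
-/

section l2

variable {α β : Type*} [Fintype α] [Fintype β]

lemma l2_eq_norm_toLp (v : α → ℝ) : l2 v = ‖WithLp.toLp 2 v‖ := by
  simp [l2, EuclideanSpace.norm_eq, sq_abs]

lemma l2_nonneg (v : α → ℝ) : 0 ≤ l2 v := Real.sqrt_nonneg _

lemma l2_sq (v : α → ℝ) : l2 v ^ 2 = ∑ i, v i ^ 2 :=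
  Real.sq_sqrt (sum_nonneg fun _ _ => sq_nonneg _)

lemma l2_sub_le (u v : α → ℝ) : l2 (u - v) ≤ l2 u + l2 v := by
  simpa only [l2_eq_norm_toLp, WithLp.toLp_sub] using norm_sub_le _ _

lemma l2_smul (c : ℝ) (v : α → ℝ) : l2 (c • v) = |c| * l2 v := by
  simp only [l2_eq_norm_toLp, WithLp.toLp_smul, norm_smul, Real.norm_eq_abs]

lemma abs_dotProduct_le_l2_mul_l2 (u v : α → ℝ) : |u ⬝ᵥ v| ≤ l2 u * l2 v := by
  rw [l2_eq_norm_toLp, l2_eq_norm_toLp]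
  convert abs_real_inner_le_norm (WithLp.toLp 2 u) (WithLp.toLp 2 v) using 2
  simp [PiLp.inner_apply, dotProduct, mul_comm]

lemma l2_mulVec_le [DecidableEq β] (M : Matrix α β ℝ) (v : β → ℝ) :
    l2 (M *ᵥ v) ≤ spec M * l2 v := by
  rw [l2_eq_norm_toLp, l2_eq_norm_toLp]
  exact (LinearMap.toContinuousLinearMap (toEuclideanLin M)).le_opNorm (WithLp.toLp 2 v)

lemma spec_nonneg [DecidableEq β] (M : Matrix α β ℝ) : 0 ≤ spec M := norm_nonneg _

variable {ι : Type*}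

lemma l2_restrict_sq (S : Finset ι) (v : ι → ℝ) : l2 (S.restrict v) ^ 2 = ∑ i ∈ S, v i ^ 2 :=
  (l2_sq _).trans (sum_coe_sort S fun i => v i ^ 2)

lemma l2_restrict_union_sq [DecidableEq ι] {S R : Finset ι} (h : Disjoint S R) (v : ι → ℝ) :
    l2 ((S ∪ R).restrict v) ^ 2 = l2 (S.restrict v) ^ 2 + l2 (R.restrict v) ^ 2 := by
  simp only [l2_restrict_sq, sum_union h]

lemma l2_restrict_ite [DecidableEq ι] {T S : Finset ι} (h : T ⊆ S) (v : ι → ℝ) :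
    l2 (S.restrict fun i => if i ∈ T then v i else 0) = l2 (T.restrict v) := by
  rw [← Real.sqrt_sq (l2_nonneg _), ← Real.sqrt_sq (l2_nonneg (T.restrict v))]
  simp only [l2_restrict_sq, ite_pow, zero_pow two_ne_zero, sum_ite_mem, inter_eq_right.mpr h]

end l2

lemma union_union_sdiff_of_subset {ι : Type*} [DecidableEq ι] {s t u : Finset ι} (h : t ⊆ u) :
    s ∪ t ∪ (u \ t) = s ∪ u := by
  rw [union_assoc, union_sdiff_of_subset h]

lemma Disjoint.union_sdiff {ι : Type*} [DecidableEq ι] {s t u : Finset ι} (h : Disjoint s u) :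
    Disjoint (s ∪ t) (u \ t) :=
  disjoint_union_left.mpr ⟨h.mono_right sdiff_subset, disjoint_sdiff⟩

lemma linf_le_iSup_mul_add_linf {ι : Type*} [Fintype ι] {v u g : ι → ℝ} {D : ℝ} (hD : 0 ≤ D)
    (h : ∀ i, |v i| ≤ g i * D + |u i|) : linf v ≤ (⨆ i, g i) * D + linf u := by
  cases isEmpty_or_nonempty ι
  · simp [linf]
  · refine ciSup_le fun i => (h i).trans (add_le_add ?_ ?_)
    · exact mul_le_mul_of_nonneg_right (le_ciSup (Set.finite_range g).bddAbove i) hD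
    · exact le_ciSup (Set.finite_range fun i => |u i|).bddAbove i

lemma sqrt_sq_add_sq_le {a r s t : ℝ} (ha : 0 ≤ a) (hr : 0 ≤ r) (ht : 0 ≤ t)
    (h : a ≤ t + s * r) : √(a ^ 2 + r ^ 2) ≤ t + √(s ^ 2 + 1) * r := by
  have hs : s ≤ √(s ^ 2 + 1) := Real.le_sqrt_of_sq_le (by linarith)
  have hsq : √(s ^ 2 + 1) ^ 2 = s ^ 2 + 1 := Real.sq_sqrt (by positivity)
  rw [Real.sqrt_le_iff]
  constructor
  · positivity
  · nlinarith [mul_nonneg (mul_nonneg ht hr) (sub_nonneg.mpr hs), mul_le_mul h h ha (ha.trans h)]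

section colsub

variable {n m : ℕ} (A : Matrix (Fin n) (Fin m) ℝ)

lemma mulVec_eq_colsub_mulVec_restrict {F : Finset (Fin m)} {x : Fin m → ℝ}
    (hx : ∀ i ∉ F, x i = 0) : A *ᵥ x = colsub A F *ᵥ F.restrict x := by
  ext i
  simp only [mulVec, dotProduct, colsub, of_apply, Finset.restrict]
  rw [sum_coe_sort F fun l => A i l * x l]
  exact (sum_subset (subset_univ F) fun l _ hl => by rw [hx l hl, mul_zero]).symm

lemma colsub_union_mulVec_restrict {S R : Finset (Fin m)} (h : Disjoint S R) (v : Fin m → ℝ) :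
    colsub A (S ∪ R) *ᵥ (S ∪ R).restrict v =
      colsub A S *ᵥ S.restrict v + colsub A R *ᵥ R.restrict v := by
  ext i
  simp only [mulVec, dotProduct, colsub, of_apply, Finset.restrict, Pi.add_apply]
  rw [sum_coe_sort (S ∪ R) fun l => A i l * v l, sum_coe_sort S fun l => A i l * v l,
    sum_coe_sort R fun l => A i l * v l, sum_union h]

variable (T S : Finset (Fin m)) (lam : ℝ)

lemma Qmat_mulVec (v : Idx (T ∪ S) → ℝ) :
    Qmat A T S lam *ᵥ v = (colsub A (T ∪ S))ᵀ *ᵥ (colsub A (T ∪ S) *ᵥ v) +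
      lam • fun p => if p.1 ∈ T then v p else 0 := by
  rw [Qmat, add_mulVec, ← mulVec_mulVec, smul_mulVec]
  congr 2
  ext p
  by_cases hp : p.1 ∈ T <;> simp [mulVec, dotProduct, hp]

lemma restrict_cvec (y : Fin n → ℝ) (μ : Fin m → ℝ) :
    (T ∪ S).restrict (cvec A T S lam y μ) = (Qmat A T S lam)⁻¹ *ᵥ
      ((colsub A (T ∪ S))ᵀ *ᵥ y + lam • (T ∪ S).restrict fun i => if i ∈ T then μ i else 0) := by
  ext p
  simp [Finset.restrict, cvec, p.2, mulVec, dotProduct, colsub]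

lemma cvec_eq_zero (y : Fin n → ℝ) (μ : Fin m → ℝ) {i : Fin m} (hi : i ∉ T ∪ S) :
    cvec A T S lam y μ i = 0 := by
  simp [cvec, hi]

end colsub

section error

variable {n m : ℕ} (A : Matrix (Fin n) (Fin m) ℝ) {T Δ Δt : Finset (Fin m)}
  (hTΔ : Disjoint T Δ) (hsub : Δt ⊆ Δ) {lam : ℝ} {x μ : Fin m → ℝ} {w y : Fin n → ℝ}
  (hx : ∀ i ∉ T ∪ Δ, x i = 0) (hy : y = fun i => A.mulVec x i + w i)
  (hQ : IsUnit (Qmat A T Δt lam))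

include hTΔ hsub hx hy hQ in
lemma restrict_sub_cvec_eq :
    (T ∪ Δt).restrict (x - cvec A T Δt lam y μ) = (Qmat A T Δt lam)⁻¹ *ᵥ
      (lam • (T ∪ Δt).restrict (fun i => if i ∈ T then x i - μ i else 0) -
        (colsub A (T ∪ Δt))ᵀ *ᵥ w -
        ((colsub A (T ∪ Δt))ᵀ * colsub A (Δ \ Δt)) *ᵥ (Δ \ Δt).restrict x) := by
  have hAx : A *ᵥ x = colsub A (T ∪ Δt) *ᵥ (T ∪ Δt).restrict x +
      colsub A (Δ \ Δt) *ᵥ (Δ \ Δt).restrict x := by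
    rw [← colsub_union_mulVec_restrict A hTΔ.union_sdiff,
      mulVec_eq_colsub_mulVec_restrict A (F := (T ∪ Δt) ∪ (Δ \ Δt))
        (by rwa [union_union_sdiff_of_subset hsub])]
  have hxS : (T ∪ Δt).restrict x =
      (Qmat A T Δt lam)⁻¹ *ᵥ (Qmat A T Δt lam *ᵥ (T ∪ Δt).restrict x) := by
    rw [mulVec_mulVec, nonsing_inv_mul _ ((isUnit_iff_isUnit_det _).mp hQ), one_mulVec]
  have hy' : y = A *ᵥ x + w := hy
  change (T ∪ Δt).restrict x - (T ∪ Δt).restrict (cvec A T Δt lam y μ) = _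
  rw [hxS, restrict_cvec, ← mulVec_sub, Qmat_mulVec, hy', hAx]
  congr 1
  ext p
  simp only [mulVec_add, ← mulVec_mulVec, Pi.add_apply, Pi.sub_apply, Pi.smul_apply,
    smul_eq_mul, Finset.restrict]
  split_ifs <;> ring

include hTΔ hsub hx hy hQ in
lemma l2_restrict_sub_cvec_le (hlam : 0 ≤ lam) :
    l2 ((T ∪ Δt).restrict (x - cvec A T Δt lam y μ)) ≤
      lam * f2 A T Δt lam * l2 (T.restrict (x - μ)) + f3 A T Δt lam * l2 w +
        spec ((Qmat A T Δt lam)⁻¹ * (colsub A (T ∪ Δt))ᵀ * colsub A (Δ \ Δt)) *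
          l2 ((Δ \ Δt).restrict x) := by
  rw [restrict_sub_cvec_eq A hTΔ hsub hx hy hQ]
  simp only [mulVec_sub, mulVec_smul, mulVec_mulVec, ← Matrix.mul_assoc]
  refine (l2_sub_le _ _).trans (add_le_add ((l2_sub_le _ _).trans
    (add_le_add ?_ (l2_mulVec_le _ _))) (l2_mulVec_le _ _))
  rw [l2_smul, abs_of_nonneg hlam, mul_assoc]
  gcongr
  exact (l2_mulVec_le _ _).trans_eq (by rw [l2_restrict_ite subset_union_left]; rfl)

include hTΔ hsub hx hy hQ in
lemma l2_restrict_union_sub_cvec_le (hlam : 0 ≤ lam) :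
    l2 ((T ∪ Δ).restrict (x - cvec A T Δt lam y μ)) ≤
      lam * f2 A T Δt lam * l2 (T.restrict (x - μ)) + f3 A T Δt lam * l2 w +
        f4 A T Δ Δt lam * l2 ((Δ \ Δt).restrict x) := by
  have hdisj := hTΔ.union_sdiff (t := Δt)
  have hc : (Δ \ Δt).restrict (x - cvec A T Δt lam y μ) = (Δ \ Δt).restrict x := by
    ext ⟨i, hi⟩
    simp [cvec_eq_zero A T Δt lam y μ (disjoint_right.mp hdisj hi)]
  rw [← union_union_sdiff_of_subset hsub, ← Real.sqrt_sq (l2_nonneg _), l2_restrict_union_sq hdisj,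
    hc]
  exact sqrt_sq_add_sq_le (l2_nonneg _) (l2_nonneg _)
    (add_nonneg (mul_nonneg (mul_nonneg hlam (spec_nonneg _)) (l2_nonneg _))
      (mul_nonneg (spec_nonneg _) (l2_nonneg _)))
    (l2_restrict_sub_cvec_le A hTΔ hsub hx hy hQ hlam)

end error

lemma abs_col_dotProduct_residual_le {n m : ℕ} (A : Matrix (Fin n) (Fin m) ℝ)
    {F : Finset (Fin m)} {x b : Fin m → ℝ} {w y : Fin n → ℝ} (hx : ∀ i ∉ F, x i = 0)
    (hb : ∀ i ∉ F, b i = 0) (hy : y = fun i => A.mulVec x i + w i) (j : Fin m) :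
    |∑ i, A i j * (y i - (A *ᵥ b) i)| ≤
      l2 (fun p : Idx F => ∑ k, A k j * A k p.1) * l2 (F.restrict (x - b)) +
        |∑ i, A i j * w i| := by
  have hres : (fun i => y i - (A *ᵥ b) i) = colsub A F *ᵥ F.restrict (x - b) + w := by
    rw [← mulVec_eq_colsub_mulVec_restrict A (x := x - b) fun i hi => by simp [hx i hi, hb i hi],
      mulVec_sub, hy]
    ext i
    simp only [Pi.add_apply, Pi.sub_apply]
    ring
  calc |∑ i, A i j * (y i - (A *ᵥ b) i)|
      = |((fun k => A k j) ᵥ* colsub A F) ⬝ᵥ F.restrict (x - b) + ∑ i, A i j * w i| := by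
        change |(fun k => A k j) ⬝ᵥ (fun i => y i - (A *ᵥ b) i)| = _
        rw [hres, dotProduct_add, dotProduct_mulVec]
        rfl
    _ ≤ _ := (abs_add_le _ _).trans (add_le_add_left (abs_dotProduct_le_l2_mul_l2 _ _) _)

theorem stmt19_general {n m : ℕ} (A : Matrix (Fin n) (Fin m) ℝ) (T Δ Δt : Finset (Fin m))
    (hTΔ : Disjoint T Δ) (hsub : Δt ⊆ Δ) (lam : ℝ) (hlam : 0 ≤ lam)
    (x : Fin m → ℝ) (w y : Fin n → ℝ) (μ : Fin m → ℝ)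
    (hx : ∀ i ∉ T ∪ Δ, x i = 0)
    (hy : y = fun i => A.mulVec x i + w i)
    (hQ : IsUnit (Qmat A T Δt lam)) :
    linf (fun j : Idx ((T ∪ Δt)ᶜ) =>
        ∑ i, A i j.1 * (y i - A.mulVec (cvec A T Δt lam y μ) i)) ≤
      (⨆ i : Idx ((T ∪ Δt)ᶜ), l2 (fun j : Idx (T ∪ Δ) => ∑ k, A k i.1 * A k j.1)) *
        (lam * f2 A T Δt lam * l2 (fun j : Idx T => x j.1 - μ j.1) +
          f3 A T Δt lam * l2 w +
          f4 A T Δ Δt lam * l2 (fun j : Idx (Δ \ Δt) => x j.1)) +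
      linf (fun j : Idx ((T ∪ Δt)ᶜ) => ∑ i, A i j.1 * w i) := by
  have hc : ∀ i ∉ T ∪ Δ, cvec A T Δt lam y μ i = 0 := fun i hi =>
    cvec_eq_zero A T Δt lam y μ fun h => hi (union_subset_union_right hsub h)
  have herr := l2_restrict_union_sub_cvec_le A hTΔ hsub hx hy hQ (μ := μ) hlam
  refine linf_le_iSup_mul_add_linf ((l2_nonneg _).trans herr) fun j => ?_
  exact (abs_col_dotProduct_residual_le A hx hc hy j.1).trans
    (add_le_add_left (mul_le_mul_of_nonneg_left herr (l2_nonneg _)) _)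

/-- bound on the numerator of `γ*` for `Δ̃ ⊆ Δ`:
`‖A_{(T∪Δ̃)^c}'(y−Ac(Δ̃))‖_∞ ≤ maxcor(Δ̃)(λf₂‖x_T−μ̂_T‖₂ + f₃‖w‖₂ + f₄‖x_{Δ∖Δ̃}‖₂)
 + ‖A_{(T∪Δ̃)^c}'w‖_∞`. -/
theorem stmt19 {n m : ℕ} (A : Matrix (Fin n) (Fin m) ℝ) (T Δ Δt : Finset (Fin m))
    (hTΔ : Disjoint T Δ) (hsub : Δt ⊆ Δ) (lam γ : ℝ) (hlam : 0 ≤ lam)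
    (x : Fin m → ℝ) (w y : Fin n → ℝ) (μ : Fin m → ℝ)
    (hx : ∀ i ∉ T ∪ Δ, x i = 0)
    (hy : y = fun i => A.mulVec x i + w i)
    (hQ : IsUnit (Qmat A T Δt lam)) (hERC : 0 < ERC A T Δt lam)
    (hγ : γ = gammaStar A T Δt lam y μ) :
    linf (fun j : Idx ((T ∪ Δt)ᶜ) =>
        ∑ i, A i j.1 * (y i - A.mulVec (cvec A T Δt lam y μ) i)) ≤
      (⨆ i : Idx ((T ∪ Δt)ᶜ), l2 (fun j : Idx (T ∪ Δ) => ∑ k, A k i.1 * A k j.1)) *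
        (lam * f2 A T Δt lam * l2 (fun j : Idx T => x j.1 - μ j.1) +
          f3 A T Δt lam * l2 w +
          f4 A T Δ Δt lam * l2 (fun j : Idx (Δ \ Δt) => x j.1)) +
      linf (fun j : Idx ((T ∪ Δt)ᶜ) => ∑ i, A i j.1 * w i) :=
  stmt19_general A T Δ Δt hTΔ hsub lam hlam x w y μ hx hy hQ
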